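/- Let a and b be algebraic numbers that are not conjugate over ℚ (i.e., they do not share the same minimal polynomial). Then |a − b| ≥ (2·H(a)·H(b))^(−deg(a)·deg(b)), where H denotes the absolute Weil height. -/

import Mathlib

/-- The minimal polynomial over `ℤ` of an algebraic number: the primitive part
of the integer normalization of `minpoly ℚ x`. -/
noncomputable def intMinpoly (x : ℂ) : Polynomial ℤ :=
  (IsLocalization.integerNormalization (nonZeroDivisors ℤ) (minpoly ℚ x)).primPart

/-- The Mahler measure of an algebraic number `x`. -/
noncomputable def mahlerM (x : ℂ) : ℝ :=
  |((intMinpoly x).leadingCoeff : ℝ)| *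
    (((minpoly ℚ x).aroots ℂ).map (fun r => max 1 ‖r‖)).prod

/-- The absolute multiplicative Weil height `H(x) = M(x)^(1/deg x)`. -/
noncomputable def height (x : ℂ) : ℝ :=
  mahlerM x ^ (((minpoly ℚ x).natDegree : ℝ)⁻¹)

/-! Let `P`, `Q` be the primitive integer minimal polynomials of `a` and `b`, of degrees `m` and
`n`. Distinct monic irreducible polynomials share no root, so the resultant of `P` and `Q` is a
nonzero integer; over `ℂ` it equals `lc(P)^n lc(Q)^m ∏ (αᵢ - βⱼ)`, the product over all pairs of
conjugates. Bounding every factor except `a - b` by `2 max(1,|αᵢ|) max(1,|βⱼ|)` turns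
`1 ≤ |Res(P, Q)|` into `1 ≤ |a - b| 2^(mn) M(a)^n M(b)^m`, and `M(x) = H(x)^(deg x)`. -/

open Polynomial

theorem norm_sub_le_two_mul_max_one_mul_max_one {E : Type*} [SeminormedAddCommGroup E]
    (x y : E) : ‖x - y‖ ≤ 2 * max 1 ‖x‖ * max 1 ‖y‖ := by
  nlinarith [norm_sub_le x y, le_max_left 1 ‖x‖, le_max_right 1 ‖x‖, le_max_left 1 ‖y‖,
    le_max_right 1 ‖y‖]

namespace Multiset

variable {R ι κ : Type*}

theorem prod_map_le_mul_prod_map_of_mem [CommSemiring R] [PartialOrder R] [IsOrderedRing R]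
    [DecidableEq ι] {s : Multiset ι} {f g : ι → R} (hf : ∀ i ∈ s, 0 ≤ f i)
    (hfg : ∀ i ∈ s, f i ≤ g i) (hg : ∀ i ∈ s, 1 ≤ g i) {x : ι} (hx : x ∈ s) :
    (s.map f).prod ≤ f x * (s.map g).prod := by
  have hs : ∀ i ∈ s.erase x, i ∈ s := fun i hi => mem_of_mem_erase hi
  rw [← prod_map_erase hx (f := f), ← prod_map_erase hx (f := g)]
  refine mul_le_mul_of_nonneg_left ?_ (hf x hx)
  calc ((s.erase x).map f).prod ≤ ((s.erase x).map g).prod :=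
        prod_map_le_prod_map₀ f g (fun i hi => hf i (hs i hi)) fun i hi => hfg i (hs i hi)
    _ ≤ g x * ((s.erase x).map g).prod :=
        le_mul_of_one_le_left
          (prod_nonneg fun _ hy => by
            obtain ⟨i, hi, rfl⟩ := mem_map.mp hy
            exact zero_le_one.trans (hg i (hs i hi)))
          (hg x hx)

theorem prod_map_product_mul_mul [CommMonoid R] (s : Multiset ι) (t : Multiset κ) (c : R)
    (u : ι → R) (v : κ → R) :
    ((s ×ˢ t).map fun p => c * u p.1 * v p.2).prod =
      c ^ (card s * card t) * (s.map u).prod ^ card t * (t.map v).prod ^ card s := by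
  simp only [prod_map_product_eq_prod_prod, prod_map_mul, map_const', prod_replicate,
    prod_map_pow, card_product]

end Multiset

theorem Polynomial.resultant_C_mul_C_mul_of_monic {K : Type*} [Field K] {f g : K[X]}
    (hf : f.Monic) (hg : g.Monic) (hfs : f.Splits) (hgs : g.Splits) (c d : K) :
    resultant (C c * f) (C d * g) f.natDegree g.natDegree =
      c ^ g.natDegree * d ^ f.natDegree * ((f.roots ×ˢ g.roots).map fun p => p.1 - p.2).prod := by
  rw [resultant_C_mul_left, resultant_C_mul_right, ← resultant_eq_prod_roots_sub f g hf hg hfs hgs]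
  ring

theorem self_mem_aroots_minpoly {x : ℂ} (hx : IsIntegral ℚ x) : x ∈ (minpoly ℚ x).aroots ℂ :=
  mem_aroots.mpr ⟨minpoly.ne_zero hx, minpoly.aeval ℚ x⟩

theorem minpoly_eq_of_mem_aroots {x z : ℂ} (hz : z ∈ (minpoly ℚ x).aroots ℂ) :
    minpoly ℚ z = minpoly ℚ x := by
  obtain ⟨hx0, hzx⟩ := mem_aroots.mp hz
  have hx : IsIntegral ℚ x := by_contra fun h => hx0 (minpoly.eq_zero h)
  exact (minpoly.eq_of_irreducible_of_monic (minpoly.irreducible hx) hzx (minpoly.monic hx)).symm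

theorem ne_of_mem_aroots_minpoly {a b α β : ℂ} (hne : minpoly ℚ a ≠ minpoly ℚ b)
    (hα : α ∈ (minpoly ℚ a).aroots ℂ) (hβ : β ∈ (minpoly ℚ b).aroots ℂ) : α ≠ β := fun h =>
  hne (by rw [← minpoly_eq_of_mem_aroots hα, h, minpoly_eq_of_mem_aroots hβ])

theorem intMinpoly_leadingCoeff_ne_zero (x : ℂ) : (intMinpoly x).leadingCoeff ≠ 0 :=
  leadingCoeff_ne_zero.mpr (primPart_ne_zero _)

section intMinpoly

variable {x : ℂ}

theorem intMinpoly_map_eq_C_mul (hx : IsIntegral ℚ x) :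
    ∃ r : ℚ, (intMinpoly x).map (algebraMap ℤ ℚ) = C r * minpoly ℚ x := by
  set N := IsLocalization.integerNormalization (nonZeroDivisors ℤ) (minpoly ℚ x)
  obtain ⟨b, -, hb⟩ := IsLocalization.integerNormalization_spec (nonZeroDivisors ℤ) (minpoly ℚ x)
  have hc : (N.content : ℚ) ≠ 0 := by
    rw [Int.cast_ne_zero, Ne, content_eq_zero_iff, IsFractionRing.integerNormalization_eq_zero_iff]
    exact minpoly.ne_zero hx
  have hN := congrArg (map (algebraMap ℤ ℚ)) N.eq_C_content_mul_primPart
  rw [hb, Polynomial.map_mul, map_C, ← Int.cast_smul_eq_zsmul ℚ, smul_eq_C_mul,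
    eq_intCast (algebraMap ℤ ℚ)] at hN
  refine ⟨b / N.content, mul_left_cancel₀ (C_ne_zero.mpr hc) ?_⟩
  rw [intMinpoly, ← hN, ← mul_assoc, ← C_mul, mul_div_cancel₀ _ hc]

theorem intMinpoly_map_eq (hx : IsIntegral ℚ x) :
    (intMinpoly x).map (algebraMap ℤ ℚ) = C ((intMinpoly x).leadingCoeff : ℚ) * minpoly ℚ x := by
  obtain ⟨r, hr⟩ := intMinpoly_map_eq_C_mul hx
  have hlc := congrArg leadingCoeff hr
  rw [leadingCoeff_map_of_injective (RingHom.injective_int _), leadingCoeff_mul, leadingCoeff_C,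
    (minpoly.monic hx).leadingCoeff, mul_one] at hlc
  rwa [← hlc] at hr

theorem natDegree_intMinpoly (hx : IsIntegral ℚ x) :
    (intMinpoly x).natDegree = (minpoly ℚ x).natDegree := by
  rw [← natDegree_map_eq_of_injective (RingHom.injective_int (algebraMap ℤ ℚ)),
    intMinpoly_map_eq hx,
    natDegree_C_mul (Int.cast_ne_zero.mpr (intMinpoly_leadingCoeff_ne_zero x))]

theorem intMinpoly_map_complex (hx : IsIntegral ℚ x) :
    (intMinpoly x).map (Int.castRingHom ℂ) =
      C ((intMinpoly x).leadingCoeff : ℂ) * (minpoly ℚ x).map (algebraMap ℚ ℂ) := by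
  have h := congrArg (map (algebraMap ℚ ℂ)) (intMinpoly_map_eq hx)
  rwa [map_map, Polynomial.map_mul, map_C, map_intCast,
    RingHom.ext_int ((algebraMap ℚ ℂ).comp (algebraMap ℤ ℚ)) (Int.castRingHom ℂ)] at h

end intMinpoly

theorem intCast_resultant_intMinpoly {a b : ℂ} (ha : IsIntegral ℚ a) (hb : IsIntegral ℚ b) :
    ((resultant (intMinpoly a) (intMinpoly b) : ℤ) : ℂ) =
      ((intMinpoly a).leadingCoeff : ℂ) ^ (minpoly ℚ b).natDegree *
        ((intMinpoly b).leadingCoeff : ℂ) ^ (minpoly ℚ a).natDegree *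
        (((minpoly ℚ a).aroots ℂ ×ˢ (minpoly ℚ b).aroots ℂ).map fun p => p.1 - p.2).prod := by
  have h := resultant_C_mul_C_mul_of_monic ((minpoly.monic ha).map (algebraMap ℚ ℂ))
    ((minpoly.monic hb).map (algebraMap ℚ ℂ)) (IsAlgClosed.splits _) (IsAlgClosed.splits _)
    ((intMinpoly a).leadingCoeff : ℂ) ((intMinpoly b).leadingCoeff : ℂ)
  rw [natDegree_map, natDegree_map] at h
  rw [← eq_intCast (Int.castRingHom ℂ), ← resultant_map_map, intMinpoly_map_complex ha,
    intMinpoly_map_complex hb, natDegree_intMinpoly ha, natDegree_intMinpoly hb, h, aroots_def,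
    aroots_def]

theorem mahlerM_nonneg (x : ℂ) : 0 ≤ mahlerM x :=
  mul_nonneg (abs_nonneg _) (Multiset.prod_nonneg fun _ hr => by
    obtain ⟨z, -, rfl⟩ := Multiset.mem_map.mp hr
    exact zero_le_one.trans (le_max_left _ _))

theorem height_nonneg (x : ℂ) : 0 ≤ height x :=
  Real.rpow_nonneg (mahlerM_nonneg x) _

theorem height_rpow_natDegree_mul {x : ℂ} (hx : IsIntegral ℚ x) (k : ℕ) :
    height x ^ (((minpoly ℚ x).natDegree : ℝ) * k) = mahlerM x ^ k := by
  have hd : ((minpoly ℚ x).natDegree : ℝ) ≠ 0 := by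
    exact_mod_cast (minpoly.natDegree_pos hx).ne'
  rw [height, ← Real.rpow_mul (mahlerM_nonneg x), inv_mul_cancel_left₀ hd, Real.rpow_natCast]

theorem one_le_leadingCoeff_pow_mul_prod_norm_sub {a b : ℂ} (ha : IsIntegral ℚ a)
    (hb : IsIntegral ℚ b) (hne : minpoly ℚ a ≠ minpoly ℚ b) :
    1 ≤ |((intMinpoly a).leadingCoeff : ℝ)| ^ (minpoly ℚ b).natDegree *
      |((intMinpoly b).leadingCoeff : ℝ)| ^ (minpoly ℚ a).natDegree *
        (((minpoly ℚ a).aroots ℂ ×ˢ (minpoly ℚ b).aroots ℂ).map fun p => ‖p.1 - p.2‖).prod := by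
  have hres := intCast_resultant_intMinpoly ha hb
  have hres0 : ((resultant (intMinpoly a) (intMinpoly b) : ℤ) : ℂ) ≠ 0 := by
    rw [hres]
    refine mul_ne_zero (mul_ne_zero ?_ ?_) (Multiset.prod_ne_zero fun h0 => ?_)
    · exact pow_ne_zero _ (Int.cast_ne_zero.mpr (intMinpoly_leadingCoeff_ne_zero a))
    · exact pow_ne_zero _ (Int.cast_ne_zero.mpr (intMinpoly_leadingCoeff_ne_zero b))
    · obtain ⟨⟨α, β⟩, hp, hp0⟩ := Multiset.mem_map.mp h0
      obtain ⟨hα, hβ⟩ := Multiset.mem_product.mp hp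
      exact ne_of_mem_aroots_minpoly hne hα hβ (sub_eq_zero.mp hp0)
  calc (1 : ℝ) ≤ ‖((resultant (intMinpoly a) (intMinpoly b) : ℤ) : ℂ)‖ := by
        rw [Complex.norm_intCast]
        exact_mod_cast Int.one_le_abs (by exact_mod_cast hres0)
    _ = _ := by
        rw [hres, norm_mul, norm_mul, norm_pow, norm_pow, Complex.norm_intCast,
          Complex.norm_intCast, ← normHom_apply, map_multiset_prod, Multiset.map_map]
        rfl

theorem one_le_norm_sub_mul_mahlerM {a b : ℂ} (ha : IsIntegral ℚ a) (hb : IsIntegral ℚ b)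
    (hne : minpoly ℚ a ≠ minpoly ℚ b) :
    1 ≤ ‖a - b‖ * (2 ^ ((minpoly ℚ a).natDegree * (minpoly ℚ b).natDegree) *
      mahlerM a ^ (minpoly ℚ b).natDegree * mahlerM b ^ (minpoly ℚ a).natDegree) := by
  set A := (minpoly ℚ a).aroots ℂ
  set B := (minpoly ℚ b).aroots ℂ
  have hmem : (a, b) ∈ A ×ˢ B :=
    Multiset.mem_product.mpr ⟨self_mem_aroots_minpoly ha, self_mem_aroots_minpoly hb⟩
  have hprod := Multiset.prod_map_le_mul_prod_map_of_mem (f := fun p => ‖p.1 - p.2‖)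
    (g := fun p => 2 * max 1 ‖p.1‖ * max 1 ‖p.2‖) (fun _ _ => norm_nonneg _)
    (fun p _ => norm_sub_le_two_mul_max_one_mul_max_one p.1 p.2)
    (fun p _ => by nlinarith [le_max_left 1 ‖p.1‖, le_max_left 1 ‖p.2‖]) hmem
  rw [Multiset.prod_map_product_mul_mul A B 2 (fun z => max 1 ‖z‖) (fun z => max 1 ‖z‖),
    IsAlgClosed.card_aroots_eq_natDegree, IsAlgClosed.card_aroots_eq_natDegree] at hprod
  calc (1 : ℝ) ≤ _ := one_le_leadingCoeff_pow_mul_prod_norm_sub ha hb hne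
    _ ≤ |((intMinpoly a).leadingCoeff : ℝ)| ^ (minpoly ℚ b).natDegree *
          |((intMinpoly b).leadingCoeff : ℝ)| ^ (minpoly ℚ a).natDegree * _ :=
        mul_le_mul_of_nonneg_left hprod (by positivity)
    _ = _ := by simp only [mahlerM]; ring

/-- Lemma 3.6 (Liouville inequality): if `a, b` are non-conjugate algebraic
numbers then `|a − b| ≥ (2·H(a)·H(b))^(−deg(a)·deg(b))`. -/
theorem stmt_3 (a b : ℂ) (ha : IsAlgebraic ℚ a) (hb : IsAlgebraic ℚ b)
    (hne : minpoly ℚ a ≠ minpoly ℚ b) :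
    (2 * height a * height b) ^
        (-(((minpoly ℚ a).natDegree : ℝ) * ((minpoly ℚ b).natDegree : ℝ))) ≤
      ‖a - b‖ := by
  have key := one_le_norm_sub_mul_mahlerM ha.isIntegral hb.isIntegral hne
  have hpow : (2 * height a * height b) ^
      (((minpoly ℚ a).natDegree : ℝ) * ((minpoly ℚ b).natDegree : ℝ)) =
      2 ^ ((minpoly ℚ a).natDegree * (minpoly ℚ b).natDegree) *
        mahlerM a ^ (minpoly ℚ b).natDegree * mahlerM b ^ (minpoly ℚ a).natDegree := by
    rw [Real.mul_rpow (by positivity [height_nonneg a]) (height_nonneg b),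
      Real.mul_rpow zero_le_two (height_nonneg a), height_rpow_natDegree_mul ha.isIntegral,
      mul_comm ((minpoly ℚ a).natDegree : ℝ), height_rpow_natDegree_mul hb.isIntegral,
      ← Nat.cast_mul, Real.rpow_natCast, mul_comm (minpoly ℚ b).natDegree]
  have hpos := pos_of_mul_pos_right (zero_lt_one.trans_le key) (norm_nonneg _)
  rw [Real.rpow_neg (by positivity [height_nonneg a, height_nonneg b]), hpow,
    inv_le_iff_one_le_mul₀ hpos]
  exact key
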